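/- arXiv:1011.0929 — 5 statements merged into one kernel-verified Lean document; each statement's English description precedes it below -/
import Mathlib

section
/- For every natural number n and every real x with cos x ≠ 0, the n-th derivative of the tangent function at x equals P_n evaluated at tan x, i.e. iteratedDeriv n tan x = P_n(tan x). -/
open Polynomial

/-- The derivative polynomials `P_n`: `P_0 = t`, `P_{n+1} = (1+t²)·P_n'`. -/
noncomputable def polyP : ℕ → Polynomial ℝ
  | 0 => X
  | n + 1 => (1 + X ^ 2) * derivative (polyP n)

theorem stmt0 (n : ℕ) (x : ℝ) (hx : Real.cos x ≠ 0) :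
    iteratedDeriv n Real.tan x = (polyP n).eval (Real.tan x) := by
  induction n generalizing x with
  | zero => simp [polyP]
  | succ n ih =>
    rw [iteratedDeriv_succ]
    have hset : ∀ᶠ y in nhds x, Real.cos y ≠ 0 :=
      (Real.continuous_cos.isOpen_preimage _ isOpen_compl_singleton).mem_nhds hx
    have heq : iteratedDeriv n Real.tan =ᶠ[nhds x]
        fun y => (polyP n).eval (Real.tan y) :=
      hset.mono fun y hy => ih y hy
    rw [heq.deriv_eq]
    have hder : HasDerivAt (fun y => (polyP n).eval (Real.tan y))
        ((derivative (polyP n)).eval (Real.tan x) * (1 / Real.cos x ^ 2)) x :=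
      (Polynomial.hasDerivAt (polyP n) (Real.tan x)).comp x (Real.hasDerivAt_tan hx)
    rw [hder.deriv]
    show _ = ((1 + X ^ 2) * derivative (polyP n)).eval (Real.tan x)
    have h1 : 1 / Real.cos x ^ 2 = 1 + Real.tan x ^ 2 := by
      rw [← Real.inv_one_add_tan_sq hx, one_div, inv_inv]
    rw [h1]
    simp
    ring
end

section
/- For every real t there exists ε > 0 such that for all real z with |z| < ε one has cos z − t·sin z ≠ 0 and the series ∑_{n=0}^∞ P_n(t)·z^n/n! converges to (sin z + t·cos z)/(cos z − t·sin z). -/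
/-!
Near `x₀ = arctan t` the function `tan` is analytic, its `n`-th derivative is `P_n ∘ tan`
(the recurrence for `P_n` is the chain rule together with `tan' = 1 + tan²`), and
`tan (x₀ + z) = (sin z + t cos z) / (cos z - t sin z)` by the addition formulas.
The series is therefore the Taylor series of `tan` at `x₀`, evaluated at the increment `z`.
-/

open Polynomial

open Real Filter Topology Nat

theorem AnalyticAt.eventually_hasSum_iteratedDeriv {𝕜 F : Type*} [NontriviallyNormedField 𝕜]
    [CharZero 𝕜] [NormedAddCommGroup F] [NormedSpace 𝕜 F] [CompleteSpace F] {f : 𝕜 → F}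
    {x : 𝕜} (hf : AnalyticAt 𝕜 f x) :
    ∀ᶠ z in 𝓝 0, HasSum (fun n ↦ (n ! : 𝕜)⁻¹ • z ^ n • iteratedDeriv n f x) (f (x + z)) := by
  obtain ⟨p, r, hp⟩ := hf
  filter_upwards [Metric.eball_mem_nhds 0 hp.r_pos] with z hz
  convert hp.hasSum_iteratedFDeriv hz using 3 with n
  simpa [iteratedDeriv_eq_iteratedFDeriv] using
    ((iteratedFDeriv 𝕜 n f x).map_smul_univ (fun _ ↦ z) (fun _ ↦ 1)).symm

namespace Real

theorem hasDerivAt_tan_one_add_sq {x : ℝ} (hx : cos x ≠ 0) :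
    HasDerivAt tan (1 + tan x ^ 2) x := by
  simpa [← inv_one_add_tan_sq hx] using hasDerivAt_tan hx

theorem analyticAt_tan {x : ℝ} (hx : cos x ≠ 0) : AnalyticAt ℝ tan x :=
  (contDiffAt_tan.2 hx).analyticAt

theorem iteratedDeriv_tan_eq_eval_polyP (n : ℕ) {x : ℝ} (hx : cos x ≠ 0) :
    iteratedDeriv n tan x = (polyP n).eval (tan x) := by
  induction n generalizing x with
  | zero => simp [polyP]
  | succ n ih =>
    have hnear : iteratedDeriv n tan =ᶠ[𝓝 x] fun y ↦ (polyP n).eval (tan y) :=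
      eventually_of_mem (isOpen_ne_fun continuous_cos continuous_const |>.mem_nhds hx)
        fun y hy ↦ ih hy
    rw [iteratedDeriv_succ, hnear.deriv_eq]
    exact ((polyP n).hasDerivAt (tan x) |>.comp x (hasDerivAt_tan_one_add_sq hx)).deriv.trans
      (by simp [polyP, mul_comm])

theorem tan_add_eq_div {x : ℝ} (hx : cos x ≠ 0) (z : ℝ) :
    tan (x + z) = (sin z + tan x * cos z) / (cos z - tan x * sin z) := by
  rw [tan_eq_sin_div_cos, tan_eq_sin_div_cos, sin_add, cos_add]
  field_simp
  ring

end Real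

theorem stmt4 (t : ℝ) :
    ∃ ε > 0, ∀ z : ℝ, |z| < ε →
      Real.cos z - t * Real.sin z ≠ 0 ∧
      HasSum (fun n : ℕ => (polyP n).eval t * z ^ n / n.factorial)
        ((Real.sin z + t * Real.cos z) / (Real.cos z - t * Real.sin z)) := by
  have hcos : cos (arctan t) ≠ 0 := (cos_arctan_pos t).ne'
  have hdenom : ∀ᶠ z in 𝓝 (0 : ℝ), cos z - t * sin z ≠ 0 :=
    (by fun_prop : Continuous fun z ↦ cos z - t * sin z).continuousAt.eventually_ne (by simp)
  obtain ⟨ε, hε, hnear⟩ := Metric.eventually_nhds_iff.mp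
    (hdenom.and (analyticAt_tan hcos).eventually_hasSum_iteratedDeriv)
  refine ⟨ε, hε, fun z hz ↦ ?_⟩
  obtain ⟨hne, hsum⟩ := hnear (by simpa using hz)
  refine ⟨hne, ?_⟩
  have hterm (n : ℕ) : (n ! : ℝ)⁻¹ • z ^ n • iteratedDeriv n tan (arctan t)
      = (polyP n).eval t * z ^ n / n ! := by
    rw [iteratedDeriv_tan_eq_eval_polyP n hcos, tan_arctan, smul_eq_mul, smul_eq_mul]
    field_simp
  rwa [tan_add_eq_div hcos, tan_arctan, funext hterm] at hsum
end

section
/- For every natural number n: P_n(1) = 2^n·E_n, Q_n(1) = S_n, and R_n(1) = 2^n·E_{n+1}, where E_n are the Euler numbers and S_n the Springer numbers. -/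
/-!
`tan + sec` satisfies `f' = (1 + f²)/2`, and `F = 1/(cos - sin)` satisfies `F' = g F` where
`g = (cos + sin)/(cos - sin) = tan (z + π/4)` satisfies `g' = 1 + g²`. Differentiating such
Riccati-type relations repeatedly reproduces the recurrences of `P_n` and `Q_n^{(a)}`, so the
`n`-th derivatives are `2⁻ⁿ P_n(f)` and `Q_n(g) F`; evaluate at `0`, where `f = g = F = 1`.
For `R_n`, differentiating `P_{n+1} = (1 + t²) R_n` one step is exactly the `a = 2` recurrence.
-/

open Polynomial

/-- The derivative polynomials `Q_n^{(a)}`: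
`Q_0^{(a)} = 1`, `Q_{n+1}^{(a)} = (1+t²)·(Q_n^{(a)})' + a·t·Q_n^{(a)}`;
`Q_n = Q_n^{(1)}` and `R_n = Q_n^{(2)}`. -/
noncomputable def polyQ (a : ℝ) : ℕ → Polynomial ℝ
  | 0 => 1
  | n + 1 => (1 + X ^ 2) * derivative (polyQ a n) + C a * X * polyQ a n

/-- The Euler numbers, `E_n = (d/dz)^n (tan z + sec z) |_{z=0}`. -/
noncomputable def eulerE (n : ℕ) : ℝ :=
  iteratedDeriv n (fun z => Real.tan z + 1 / Real.cos z) 0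

/-- The Springer numbers, `S_n = (d/dz)^n (1/(cos z - sin z)) |_{z=0}`. -/
noncomputable def springerS (n : ℕ) : ℝ :=
  iteratedDeriv n (fun z => 1 / (Real.cos z - Real.sin z)) 0

open Set

theorem iteratedDeriv_eqOn_of_hasDerivAt {𝕜 E : Type*} [NontriviallyNormedField 𝕜]
    [NormedAddCommGroup E] [NormedSpace 𝕜 E] {s : Set 𝕜} (hs : IsOpen s) {F : 𝕜 → E}
    {φ : ℕ → 𝕜 → E} (h₀ : EqOn F (φ 0) s)
    (hφ : ∀ n, ∀ x ∈ s, HasDerivAt (φ n) (φ (n + 1) x) x) (n : ℕ) :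
    EqOn (iteratedDeriv n F) (φ n) s := by
  induction n with
  | zero => simpa using h₀
  | succ n ih =>
    intro x hx
    rw [iteratedDeriv_succ]
    exact ((hφ n x hx).congr_of_eventuallyEq
      (Filter.eventually_of_mem (hs.mem_nhds hx) ih)).deriv

theorem iteratedDeriv_eqOn_polyP {s : Set ℝ} (hs : IsOpen s) {g : ℝ → ℝ} {k : ℝ}
    (hg : ∀ x ∈ s, HasDerivAt g (k * (1 + g x ^ 2)) x) (n : ℕ) :
    EqOn (iteratedDeriv n g) (fun x => k ^ n * (polyP n).eval (g x)) s := by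
  refine iteratedDeriv_eqOn_of_hasDerivAt (φ := fun m x => k ^ m * (polyP m).eval (g x)) hs
    (fun x _ => by simp [polyP]) (fun m x hx => ?_) n
  refine ((((polyP m).hasDerivAt (g x)).comp x (hg x hx)).const_mul (k ^ m)).congr_deriv ?_
  simp only [polyP, eval_mul, eval_add, eval_one, eval_pow, eval_X]
  ring

theorem iteratedDeriv_eqOn_polyQ {s : Set ℝ} (hs : IsOpen s) {g F : ℝ → ℝ} {k a : ℝ}
    (hg : ∀ x ∈ s, HasDerivAt g (k * (1 + g x ^ 2)) x)
    (hF : ∀ x ∈ s, HasDerivAt F (k * a * g x * F x) x) (n : ℕ) :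
    EqOn (iteratedDeriv n F) (fun x => k ^ n * (polyQ a n).eval (g x) * F x) s := by
  refine iteratedDeriv_eqOn_of_hasDerivAt
    (φ := fun m x => k ^ m * (polyQ a m).eval (g x) * F x) hs
    (fun x _ => by simp [polyQ]) (fun m x hx => ?_) n
  refine (((((polyQ a m).hasDerivAt (g x)).comp x (hg x hx)).const_mul (k ^ m)).mul
    (hF x hx)).congr_deriv ?_
  simp only [polyQ, eval_mul, eval_add, eval_one, eval_pow, eval_X, eval_C, Function.comp_apply]
  ring

theorem polyP_succ (n : ℕ) : polyP (n + 1) = (1 + X ^ 2) * polyQ 2 n := by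
  induction n with
  | zero => simp [polyP, polyQ]
  | succ n ih =>
    rw [polyP, ih, polyQ, derivative_mul]
    have hd : derivative ((1 : ℝ[X]) + X ^ 2) = C 2 * X := by simp [derivative_pow]
    rw [hd]
    ring

open Real

theorem hasDerivAt_tan_add_sec {z : ℝ} (h : cos z ≠ 0) :
    HasDerivAt (fun z => tan z + 1 / cos z) (2⁻¹ * (1 + (tan z + 1 / cos z) ^ 2)) z := by
  have hsec : HasDerivAt (fun z => 1 / cos z) (sin z / cos z ^ 2) z := by
    simpa [one_div] using (hasDerivAt_cos z).fun_inv h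
  refine ((hasDerivAt_tan h).fun_add hsec).congr_deriv ?_
  rw [tan_eq_sin_div_cos]
  field_simp
  nlinarith [sin_sq_add_cos_sq z]

theorem hasDerivAt_cos_add_sin_div_cos_sub_sin {z : ℝ} (h : cos z - sin z ≠ 0) :
    HasDerivAt (fun z => (cos z + sin z) / (cos z - sin z))
      (1 + ((cos z + sin z) / (cos z - sin z)) ^ 2) z := by
  refine (((hasDerivAt_cos z).fun_add (hasDerivAt_sin z)).fun_div
    ((hasDerivAt_cos z).fun_sub (hasDerivAt_sin z)) h).congr_deriv ?_
  field_simp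
  nlinarith [sin_sq_add_cos_sq z]

theorem hasDerivAt_one_div_cos_sub_sin {z : ℝ} (h : cos z - sin z ≠ 0) :
    HasDerivAt (fun z => 1 / (cos z - sin z))
      ((cos z + sin z) / (cos z - sin z) * (1 / (cos z - sin z))) z := by
  refine ((hasDerivAt_const z 1).fun_div
    ((hasDerivAt_cos z).fun_sub (hasDerivAt_sin z)) h).congr_deriv ?_
  field_simp
  ring

theorem eulerE_eq_eval_polyP (n : ℕ) : eulerE n = 2⁻¹ ^ n * (polyP n).eval 1 := by
  have hs : IsOpen {z : ℝ | cos z ≠ 0} := isOpen_ne_fun continuous_cos continuous_const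
  rw [eulerE]
  simpa using iteratedDeriv_eqOn_polyP hs (fun z hz => hasDerivAt_tan_add_sec hz) n
    (show cos 0 ≠ 0 by simp)

theorem springerS_eq_eval_polyQ (n : ℕ) : springerS n = (polyQ 1 n).eval 1 := by
  have hs : IsOpen {z : ℝ | cos z - sin z ≠ 0} :=
    isOpen_ne_fun (continuous_cos.sub continuous_sin) continuous_const
  have h := iteratedDeriv_eqOn_polyQ hs (k := 1) (a := 1)
    (fun z hz => by simpa using hasDerivAt_cos_add_sin_div_cos_sub_sin hz)
    (fun z hz => by simpa using hasDerivAt_one_div_cos_sub_sin hz) n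
    (show cos 0 - sin 0 ≠ 0 by simp)
  rw [springerS]
  simpa using h

theorem stmt5 (n : ℕ) :
    (polyP n).eval 1 = 2 ^ n * eulerE n ∧
    (polyQ 1 n).eval 1 = springerS n ∧
    (polyQ 2 n).eval 1 = 2 ^ n * eulerE (n + 1) := by
  have hP : ∀ m, (polyP m).eval 1 = 2 ^ m * eulerE m := fun m => by
    rw [eulerE_eq_eval_polyP, ← mul_assoc, ← mul_pow]
    norm_num
  refine ⟨hP n, (springerS_eq_eval_polyQ n).symm, ?_⟩
  have h := hP (n + 1)
  rw [polyP_succ, pow_succ' (2 : ℝ), mul_assoc] at h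
  norm_num at h
  exact h
end

section
/- Let π ∈ C°_n be a cycle-alternating signed permutation of size n whose cycle decomposition consists of a single cycle {O, −O}. Then n is even if and only if O ≠ −O (the cycle consists of two distinct orbits), and n is odd if and only if O = −O (the cycle is a single orbit). -/
open Polynomial

/-- A signed permutation of size `n`: a permutation `π` of `ℤ` with `π(-i) = -π(i)`
which fixes every integer of absolute value larger than `n` (so it permutes
`{-n,…,-1,1,…,n}`). -/
def IsSignedPerm (n : ℕ) (π : Equiv.Perm ℤ) : Prop :=
  (∀ i : ℤ, π (-i) = -π i) ∧ ∀ i : ℤ, (n : ℤ) < |i| → π i = i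

/-- `π` is cycle-alternating: every `i ∈ {-n,…,-1,1,…,n}` is a cycle peak
(`π⁻¹(i) < i > π(i)`) or a cycle valley (`π⁻¹(i) > i < π(i)`). -/
def IsCycleAlt (n : ℕ) (π : Equiv.Perm ℤ) : Prop :=
  IsSignedPerm n π ∧ ∀ i : ℤ, i ≠ 0 → |i| ≤ (n : ℤ) →
    ((π⁻¹ i < i ∧ π i < i) ∨ (π⁻¹ i > i ∧ π i > i))

/-- `neg(π) = #{1 ≤ i ≤ n : π(i) < 0}`. -/
noncomputable def negStat (n : ℕ) (π : Equiv.Perm ℤ) : ℕ :=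
  ((Finset.Icc (1 : ℤ) (n : ℤ)).filter fun i => π i < 0).card

open scoped Classical in
/-- The number of cycles of a signed permutation of size `n`: a cycle is an unordered
pair `{O, -O}` of orbits; each cycle contains a unique element `i ∈ {1,…,n}` which is
the maximum of `O ∪ (-O)`, and we count those. -/
noncomputable def cyc (n : ℕ) (π : Equiv.Perm ℤ) : ℕ :=
  ((Finset.Icc (1 : ℤ) (n : ℤ)).filter fun i =>
    ∀ j : ℤ, (π.SameCycle i j ∨ π.SameCycle (-i) j) → j ≤ i).card

/-!
Along an orbit of a cycle-alternating permutation valleys and peaks alternate, and negation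
turns a valley into a peak. If the unique cycle consists of two orbits `O ≠ -O`, then
`|O| = n`, and `π` maps the valleys of `O` bijectively onto its peaks, so `n` is even. If it is
a single orbit, of length `2n`, and `π^r n = -n`, then `π^(2r) n = n` forces `n ∣ r`, while
`n` and `-n` being of opposite types forces `r` to be odd; hence `n` is odd.
-/

open Equiv Finset Function
open scoped Pointwise

noncomputable def signedRange (n : ℕ) : Finset ℤ := (Icc (-(n : ℤ)) n).erase 0

section signedRange

variable {n : ℕ} {i : ℤ}

lemma mem_signedRange : i ∈ signedRange n ↔ i ≠ 0 ∧ |i| ≤ n := by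
  simp [signedRange, abs_le]

lemma neg_mem_signedRange (hi : i ∈ signedRange n) : -i ∈ signedRange n := by
  simpa [mem_signedRange] using hi

lemma natCast_mem_signedRange (hi : i ∈ signedRange n) : (n : ℤ) ∈ signedRange n := by
  rw [mem_signedRange] at hi ⊢
  have := Int.one_le_abs hi.1
  exact ⟨by omega, by rw [abs_of_nonneg (by omega)]⟩

lemma card_signedRange (n : ℕ) : #(signedRange n) = 2 * n := by
  rw [signedRange, card_erase_of_mem (by simp), Int.card_Icc]
  omega

end signedRange

namespace Equiv.Perm

variable {α : Type*} {π : Perm α} {x y : α}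

lemma minimalPeriod_eq_card_of_sameCycle_iff {s : Finset α}
    (hs : ∀ y, π.SameCycle x y ↔ y ∈ s) : minimalPeriod π x = #s := by
  have horbit : MulAction.orbit (Subgroup.zpowers π) x = s := by
    ext y
    simp [MulAction.mem_orbit_iff, Subgroup.smul_def, ← hs, SameCycle]
  have := Nat.card_congr (MulAction.orbitZPowersEquiv π x)
  rw [horbit, Nat.card_coe_set_eq, Set.ncard_coe_finset, Nat.card_zmod] at this
  exact this.symm

lemma SameCycle.exists_pow_eq_of_minimalPeriod_pos (h : π.SameCycle x y)
    (hx : 0 < minimalPeriod π x) : ∃ r : ℕ, (π ^ r) x = y := by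
  obtain ⟨k, rfl⟩ := h
  refine ⟨(k % minimalPeriod π x : ℤ).toNat, ?_⟩
  rw [← zpow_natCast, Int.toNat_of_nonneg (Int.emod_nonneg _ (by omega))]
  exact MulAction.zpow_smul_mod_minimalPeriod π x k

lemma pow_apply_eq_self_iff_minimalPeriod_dvd {m : ℕ} :
    (π ^ m) x = x ↔ minimalPeriod π x ∣ m :=
  MulAction.pow_smul_eq_iff_minimalPeriod_dvd (a := π) (b := x)

end Equiv.Perm

def signedPermGroup (n : ℕ) : Subgroup (Perm ℤ) where
  carrier := {π | IsSignedPerm n π}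
  one_mem' := ⟨fun _ => rfl, fun _ _ => rfl⟩
  mul_mem' := fun ⟨hσ, hσ'⟩ ⟨hτ, hτ'⟩ =>
    ⟨fun i => by simp [hσ, hτ], fun i hi => by simp [hτ' i hi, hσ' i hi]⟩
  inv_mem' := fun ⟨hσ, hσ'⟩ =>
    ⟨fun i => by rw [Perm.inv_eq_iff_eq, hσ]; simp,
      fun i hi => by rw [Perm.inv_eq_iff_eq, hσ' i hi]⟩

/-- `x` and `y` lie in the same cycle `{O, -O}` of the signed permutation `π`. -/
def Equiv.Perm.SignedSameCycle (π : Perm ℤ) (x y : ℤ) : Prop :=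
  π.SameCycle x y ∨ π.SameCycle (-x) y

namespace IsSignedPerm

variable {n : ℕ} {π : Perm ℤ} {x y z : ℤ}

lemma zpow (h : IsSignedPerm n π) (k : ℤ) : IsSignedPerm n (π ^ k) :=
  (signedPermGroup n).zpow_mem h k

lemma pow (h : IsSignedPerm n π) (k : ℕ) : IsSignedPerm n (π ^ k) :=
  (signedPermGroup n).pow_mem h k

lemma apply_zero (h : IsSignedPerm n π) : π 0 = 0 := by
  have := h.1 0
  rw [neg_zero] at this
  omega

lemma apply_mem_signedRange (h : IsSignedPerm n π) (hx : x ∈ signedRange n) :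
    π x ∈ signedRange n := by
  rw [mem_signedRange] at hx ⊢
  refine ⟨fun h0 => hx.1 (π.injective (h0.trans h.apply_zero.symm)), not_lt.1 fun hlt => ?_⟩
  rw [π.injective (h.2 _ hlt)] at hlt
  exact hx.2.not_gt hlt

lemma sameCycle_neg (h : IsSignedPerm n π) (hxy : π.SameCycle x y) :
    π.SameCycle (-x) (-y) := by
  obtain ⟨k, rfl⟩ := hxy
  exact ⟨k, (h.zpow k).1 x⟩

lemma sameCycle_neg_left (h : IsSignedPerm n π) : π.SameCycle (-x) y ↔ π.SameCycle x (-y) :=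
  ⟨fun hxy => by simpa using h.sameCycle_neg hxy, fun hxy => by simpa using h.sameCycle_neg hxy⟩

lemma mem_signedRange_of_sameCycle (h : IsSignedPerm n π) (hx : x ∈ signedRange n)
    (hxy : π.SameCycle x y) : y ∈ signedRange n := by
  obtain ⟨k, rfl⟩ := hxy
  exact (h.zpow k).apply_mem_signedRange hx

lemma mem_signedRange_of_signedSameCycle (h : IsSignedPerm n π) (hx : x ∈ signedRange n)
    (hxy : π.SignedSameCycle x y) : y ∈ signedRange n :=
  hxy.elim (h.mem_signedRange_of_sameCycle hx)
    (h.mem_signedRange_of_sameCycle (neg_mem_signedRange hx))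

lemma signedSameCycle_symm (h : IsSignedPerm n π) (hxy : π.SignedSameCycle x y) :
    π.SignedSameCycle y x := by
  unfold Perm.SignedSameCycle at *
  rw [h.sameCycle_neg_left] at hxy ⊢
  exact hxy.imp (·.symm) fun hxy => (h.sameCycle_neg_left.2 hxy).symm

lemma signedSameCycle_trans (h : IsSignedPerm n π) (hxy : π.SignedSameCycle x y)
    (hyz : π.SignedSameCycle y z) : π.SignedSameCycle x z := by
  unfold Perm.SignedSameCycle at *
  rw [h.sameCycle_neg_left] at hxy hyz ⊢
  rcases hxy with hxy | hxy <;> rcases hyz with hyz | hyz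
  · exact .inl (hxy.trans hyz)
  · exact .inr (hxy.trans hyz)
  · exact .inr (hxy.trans (h.sameCycle_neg hyz))
  · exact .inl (hxy.trans (by simpa using h.sameCycle_neg hyz))

lemma sameCycle_neg_self_iff (h : IsSignedPerm n π) (hxy : π.SignedSameCycle x y) :
    π.SameCycle x (-x) ↔ π.SameCycle y (-y) := by
  rcases hxy with hxy | hxy
  · have hneg := h.sameCycle_neg hxy
    exact ⟨fun hx => hxy.symm.trans (hx.trans hneg), fun hy => hxy.trans (hy.trans hneg.symm)⟩
  · rw [h.sameCycle_neg_left] at hxy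
    have hneg : π.SameCycle (-x) y := by simpa using h.sameCycle_neg hxy
    exact ⟨fun hx => hneg.symm.trans (hx.symm.trans hxy),
      fun hy => hxy.trans (hy.symm.trans hneg.symm)⟩

lemma exists_signedSameCycle_max (h : IsSignedPerm n π) (hx : x ∈ signedRange n) :
    ∃ M ∈ Icc (1 : ℤ) n, π.SignedSameCycle x M ∧ ∀ y, π.SignedSameCycle M y → y ≤ M := by
  classical
  set C := (signedRange n).filter (π.SignedSameCycle x)
  have hxC : x ∈ C := mem_filter.2 ⟨hx, .inl (.refl π x)⟩
  have hnegxC : -x ∈ C := mem_filter.2 ⟨neg_mem_signedRange hx, .inr (.refl π (-x))⟩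
  obtain ⟨hMS, hxM⟩ := mem_filter.1 (C.max'_mem ⟨x, hxC⟩)
  refine ⟨C.max' ⟨x, hxC⟩, ?_, hxM, fun y hMy => C.le_max' y ?_⟩
  · have := C.le_max' x hxC
    have := C.le_max' (-x) hnegxC
    rw [mem_signedRange] at hx hMS
    rw [mem_Icc]
    exact ⟨by omega, (le_abs_self _).trans hMS.2⟩
  · exact mem_filter.2 ⟨h.mem_signedRange_of_signedSameCycle hMS hMy,
      h.signedSameCycle_trans hxM hMy⟩

lemma signedSameCycle_of_cyc_eq_one (h : IsSignedPerm n π) (h1 : cyc n π = 1)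
    (hx : x ∈ signedRange n) : π.SignedSameCycle n x := by
  classical
  have hn := natCast_mem_signedRange hx
  obtain ⟨M, hM, hxM, hMmax⟩ := h.exists_signedSameCycle_max hx
  have hnmax : ∀ y, π.SignedSameCycle n y → y ≤ n := fun y hy =>
    (le_abs_self y).trans (mem_signedRange.1 (h.mem_signedRange_of_signedSameCycle hn hy)).2
  have hnIcc : (n : ℤ) ∈ Icc (1 : ℤ) n := by
    rw [mem_Icc] at hM ⊢
    omega
  -- `cyc n π = 1` counts both `M` and `n`
  have hMn : M = n := card_le_one.1 h1.le M (mem_filter.2 ⟨hM, hMmax⟩) n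
    (mem_filter.2 ⟨hnIcc, hnmax⟩)
  exact h.signedSameCycle_symm (hMn ▸ hxM)

end IsSignedPerm

namespace IsCycleAlt

variable {n : ℕ} {π : Perm ℤ} {x : ℤ}

lemma apply_ne (h : IsCycleAlt n π) (hx : x ∈ signedRange n) : π x ≠ x := by
  rw [mem_signedRange] at hx
  rcases h.2 x hx.1 hx.2 with ⟨_, hlt⟩ | ⟨_, hlt⟩
  exacts [hlt.ne, hlt.ne']

lemma lt_apply_apply_iff (h : IsCycleAlt n π) (hx : x ∈ signedRange n) :
    π x < π (π x) ↔ ¬ x < π x := by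
  have hπx := mem_signedRange.1 (h.1.apply_mem_signedRange hx)
  have := h.2 (π x) hπx.1 hπx.2
  simp only [Perm.coe_inv, symm_apply_apply] at this
  omega

lemma lt_apply_pow_apply_iff (h : IsCycleAlt n π) (hx : x ∈ signedRange n) (k : ℕ) :
    (π ^ k) x < π ((π ^ k) x) ↔ (x < π x ↔ Even k) := by
  induction k with
  | zero => simp
  | succ k ih =>
    rw [pow_succ', Perm.mul_apply,
      h.lt_apply_apply_iff ((h.1.pow k).apply_mem_signedRange hx), ih, Nat.even_add_one]
    tauto

lemma neg_lt_apply_neg_iff (h : IsCycleAlt n π) (hx : x ∈ signedRange n) :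
    -x < π (-x) ↔ ¬ x < π x := by
  have := h.apply_ne hx
  rw [h.1.1 x]
  omega

lemma even_card_of_mapsTo (h : IsCycleAlt n π) {T : Finset ℤ} (hT : T ⊆ signedRange n)
    (hπT : ∀ x ∈ T, π x ∈ T) : Even #T := by
  set V := T.filter fun x => x < π x
  set P := T.filter fun x => ¬ x < π x
  have hVP : #V ≤ #P := card_le_card_of_injOn π (fun x hx => by
    obtain ⟨hxT, hxV⟩ := mem_filter.1 hx
    exact mem_filter.2 ⟨hπT x hxT, by rw [h.lt_apply_apply_iff (hT hxT)]; exact not_not.2 hxV⟩)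
    π.injective.injOn
  have hPV : #P ≤ #V := card_le_card_of_injOn π (fun x hx => by
    obtain ⟨hxT, hxP⟩ := mem_filter.1 hx
    exact mem_filter.2 ⟨hπT x hxT, (h.lt_apply_apply_iff (hT hxT)).2 hxP⟩)
    π.injective.injOn
  have hsum : #V + #P = #T := card_filter_add_card_filter_not _
  exact ⟨#V, by omega⟩

lemma even_of_not_sameCycle_neg (h : IsCycleAlt n π) (h1 : cyc n π = 1)
    (hP : ¬ π.SameCycle n (-n)) : Even n := by
  classical
  set O := (signedRange n).filter (π.SameCycle n)
  have hO : Even #O := h.even_card_of_mapsTo (filter_subset _ _) fun x hx => by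
    obtain ⟨hxS, hnx⟩ := mem_filter.1 hx
    exact mem_filter.2 ⟨h.1.apply_mem_signedRange hxS, Perm.sameCycle_apply_right.2 hnx⟩
  have hunion : O ∪ -O = signedRange n := by
    refine subset_antisymm (union_subset (filter_subset _ _) fun x hx => ?_) fun x hx => ?_
    · simpa using neg_mem_signedRange (mem_filter.1 (mem_neg'.1 hx)).1
    · rcases h.1.signedSameCycle_of_cyc_eq_one h1 hx with hnx | hnx
      · exact mem_union_left _ (mem_filter.2 ⟨hx, hnx⟩)
      · rw [h.1.sameCycle_neg_left] at hnx
        exact mem_union_right _ (mem_neg'.2 (mem_filter.2 ⟨neg_mem_signedRange hx, hnx⟩))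
  have hdisj : Disjoint O (-O) := disjoint_left.2 fun x hx hnegx => hP <|
    (mem_filter.1 hx).2.trans (h.1.sameCycle_neg_left.2 (mem_filter.1 (mem_neg'.1 hnegx)).2).symm
  have hcard := card_union_of_disjoint hdisj
  rw [hunion, card_signedRange, card_neg] at hcard
  obtain ⟨k, hk⟩ := hO
  exact ⟨k, by omega⟩

lemma odd_of_sameCycle_neg (h : IsCycleAlt n π) (h1 : cyc n π = 1)
    (hn : (n : ℤ) ∈ signedRange n) (hP : π.SameCycle n (-n)) : Odd n := by
  have horbit : ∀ y, π.SameCycle n y ↔ y ∈ signedRange n := fun y =>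
    ⟨h.1.mem_signedRange_of_sameCycle hn,
      fun hy => (h.1.signedSameCycle_of_cyc_eq_one h1 hy).elim id hP.trans⟩
  have hperiod : minimalPeriod π n = 2 * n := by
    rw [Perm.minimalPeriod_eq_card_of_sameCycle_iff horbit, card_signedRange]
  obtain ⟨r, hr⟩ := hP.exists_pow_eq_of_minimalPeriod_pos (by rw [mem_signedRange] at hn; omega)
  have hr2 : (π ^ (r + r)) n = n := by
    rw [pow_add, Perm.mul_apply, hr, (h.1.pow r).1, hr, neg_neg]
  have hdvd : n ∣ r := by
    rw [Perm.pow_apply_eq_self_iff_minimalPeriod_dvd, hperiod, ← two_mul] at hr2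
    exact Nat.dvd_of_mul_dvd_mul_left two_pos hr2
  -- `n` and `π^r n = -n` are of opposite types, so `r` is odd
  have hrodd : ¬ Even r := by
    have := h.lt_apply_pow_apply_iff hn r
    rw [hr, h.neg_lt_apply_neg_iff hn] at this
    tauto
  exact (Nat.not_even_iff_odd.1 hrodd).of_dvd_nat hdvd

lemma odd_iff_sameCycle_neg (h : IsCycleAlt n π) (h1 : cyc n π = 1) (hx : x ∈ signedRange n) :
    Odd n ↔ π.SameCycle x (-x) := by
  have hxn := h.1.signedSameCycle_symm (h.1.signedSameCycle_of_cyc_eq_one h1 hx)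
  rw [h.1.sameCycle_neg_self_iff hxn]
  refine ⟨fun hodd => ?_, h.odd_of_sameCycle_neg h1 (natCast_mem_signedRange hx)⟩
  by_contra hP
  exact Nat.not_odd_iff_even.2 (h.even_of_not_sameCycle_neg h1 hP) hodd

end IsCycleAlt

theorem stmt13 (n : ℕ) (π : Equiv.Perm ℤ) (hπ : IsCycleAlt n π) (h1 : cyc n π = 1) :
    ∀ i : ℤ, i ≠ 0 → |i| ≤ (n : ℤ) →
      (Even n ↔ ¬ π.SameCycle i (-i)) ∧ (Odd n ↔ π.SameCycle i (-i)) := by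
  intro i hi0 hin
  have hodd := hπ.odd_iff_sameCycle_neg h1 (mem_signedRange.2 ⟨hi0, hin⟩)
  exact ⟨by rw [← Nat.not_odd_iff_even, hodd], hodd⟩
end

section
/- For every natural number n, P_n(t) = ∑_{T ∈ T_n} t^{emp(T)} and Q_n(t) = ∑_{T ∈ T*_n} t^{emp(T)−1}, as identities of polynomials in t. -/
open Polynomial

/-- Complete binary trees whose leaves are either empty or labelled, and whose
internal nodes are labelled and have exactly two (ordered) children. -/
inductive BTree : Type
  | empty : BTree
  | leaf : ℕ → BTree
  | node : ℕ → BTree → BTree → BTree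

namespace BTree

/-- The multiset of labels of a tree. -/
def labels : BTree → Multiset ℕ
  | empty => 0
  | leaf l => {l}
  | node l L R => l ::ₘ (labels L + labels R)

/-- The number of empty leaves of a tree. -/
def emp : BTree → ℕ
  | empty => 1
  | leaf _ => 0
  | node _ L R => emp L + emp R

/-- Labels increase from the root toward the leaves. -/
def Increasing : BTree → Prop
  | empty => True
  | leaf _ => True
  | node l L R => (∀ m ∈ labels L, l < m) ∧ (∀ m ∈ labels R, l < m) ∧
      Increasing L ∧ Increasing R

/-- The rightmost leaf (reached from the root by always taking the right child)
is empty. -/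
def RightmostEmpty : BTree → Prop
  | empty => True
  | leaf _ => False
  | node _ _ R => RightmostEmpty R

end BTree

/-- `𝒯_n`: increasing complete binary trees whose labels are exactly `1,…,n`
(each appearing once), some leaves being empty. -/
def TreeSet (n : ℕ) : Set BTree :=
  {T | T.labels = Multiset.map (· + 1) (Multiset.range n) ∧ T.Increasing}

/-- `𝒯*_n ⊆ 𝒯_n`: the subset of trees whose rightmost leaf is empty. -/
def TreeSetStar (n : ℕ) : Set BTree :=
  {T | T ∈ TreeSet n ∧ T.RightmostEmpty}


namespace BTree

/-- insertions of label `k` at an empty leaf (two ways per leaf). -/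
def ins (k : ℕ) : BTree → List BTree
  | empty => [leaf k, node k empty empty]
  | leaf _ => []
  | node l L R =>
      ((ins k L).map fun L' => node l L' R) ++ ((ins k R).map fun R' => node l L R')

/-- insertions keeping the rightmost leaf empty. -/
def insStar (k : ℕ) : BTree → List BTree
  | empty => [node k empty empty]
  | leaf _ => []
  | node l L R =>
      ((ins k L).map fun L' => node l L' R) ++ ((insStar k R).map fun R' => node l L R')

/-- removal of the (maximal) label `k`. -/
def del (k : ℕ) : BTree → BTree
  | empty => empty
  | leaf l => if l = k then empty else leaf l
  | node l L R => if l = k then empty else node l (del k L) (del k R)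

lemma labels_eq_zero : ∀ {T : BTree}, T.labels = 0 → T = empty
  | empty, _ => rfl
  | leaf l, h => by simp [labels] at h
  | node l L R, h => by simp [labels] at h

lemma labels_mem_ins {k : ℕ} : ∀ {T T' : BTree}, T' ∈ ins k T → T'.labels = k ::ₘ T.labels
  | empty, T', h => by
    simp only [ins, List.mem_cons, List.not_mem_nil, or_false] at h
    rcases h with rfl | rfl
    · simp [labels]
    · simp [labels]
  | leaf l, T', h => by cases h
  | node l L R, T', h => by
    simp only [ins, List.mem_append, List.mem_map] at h
    rcases h with ⟨L', hL', rfl⟩ | ⟨R', hR', rfl⟩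
    · rw [labels, labels, labels_mem_ins hL']
      simp [Multiset.cons_swap, add_comm, Multiset.cons_add]
    · rw [labels, labels, labels_mem_ins hR']
      rw [Multiset.add_cons, Multiset.cons_swap]

lemma increasing_mem_ins {k : ℕ} : ∀ {T T' : BTree}, T.Increasing →
    (∀ m ∈ T.labels, m < k) → T' ∈ ins k T → T'.Increasing
  | empty, T', _, _, h => by
    simp only [ins, List.mem_cons, List.not_mem_nil, or_false] at h
    rcases h with rfl | rfl
    · exact trivial
    · simp [Increasing, labels]
  | leaf l, T', _, _, h => by cases h
  | node l L R, T', hinc, hlt, h => by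
    obtain ⟨h1, h2, h3, h4⟩ := hinc
    have hlk : l < k := hlt l (by simp [labels])
    simp only [ins, List.mem_append, List.mem_map] at h
    rcases h with ⟨L', hL', rfl⟩ | ⟨R', hR', rfl⟩
    · refine ⟨?_, h2, ?_, h4⟩
      · rw [labels_mem_ins hL']
        intro m hm
        rcases Multiset.mem_cons.1 hm with rfl | hm
        · exact hlk
        · exact h1 m hm
      · exact increasing_mem_ins h3 (fun m hm => hlt m (by simp [labels, hm])) hL'
    · refine ⟨h1, ?_, h3, ?_⟩
      · rw [labels_mem_ins hR']
        intro m hm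
        rcases Multiset.mem_cons.1 hm with rfl | hm
        · exact hlk
        · exact h2 m hm
      · exact increasing_mem_ins h4 (fun m hm => hlt m (by simp [labels, hm])) hR'

lemma insStar_sublist {k : ℕ} : ∀ T : BTree, (insStar k T).Sublist (ins k T)
  | empty => by simp [insStar, ins]
  | leaf l => by simp [insStar, ins]
  | node l L R => by
    exact List.Sublist.append (List.Sublist.refl _)
      (List.Sublist.map _ (insStar_sublist R))

lemma rightmost_mem_insStar {k : ℕ} : ∀ {T T' : BTree}, T.RightmostEmpty →
    T' ∈ insStar k T → T'.RightmostEmpty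
  | empty, T', _, h => by
    simp only [insStar, List.mem_cons, List.not_mem_nil, or_false] at h
    subst h
    exact trivial
  | leaf l, T', h, _ => h.elim
  | node l L R, T', hr, h => by
    simp only [insStar, List.mem_append, List.mem_map] at h
    rcases h with ⟨L', _, rfl⟩ | ⟨R', hR', rfl⟩
    · exact hr
    · exact rightmost_mem_insStar (T := R) (T' := R') hr hR'

lemma one_le_emp_of_rightmost : ∀ {T : BTree}, T.RightmostEmpty → 1 ≤ T.emp
  | empty, _ => le_refl _
  | leaf l, h => h.elim
  | node l L R, h => le_add_of_nonneg_of_le (Nat.zero_le _) (one_le_emp_of_rightmost h)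

lemma del_eq_of_notMem {k : ℕ} : ∀ {T : BTree}, k ∉ T.labels → del k T = T
  | empty, _ => rfl
  | leaf l, h => by
    have : l ≠ k := by rintro rfl; exact h (by simp [labels])
    simp [del, this]
  | node l L R, h => by
    have hl : l ≠ k := by rintro rfl; exact h (by simp [labels])
    have hL : k ∉ L.labels := fun hm => h (by simp [labels, hm])
    have hR : k ∉ R.labels := fun hm => h (by simp [labels, hm])
    simp [del, hl, del_eq_of_notMem hL, del_eq_of_notMem hR]

lemma del_mem_ins {k : ℕ} : ∀ {T T' : BTree}, k ∉ T.labels → T' ∈ ins k T → del k T' = T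
  | empty, T', _, h => by
    simp only [ins, List.mem_cons, List.not_mem_nil, or_false] at h
    rcases h with rfl | rfl
    · simp [del]
    · simp [del]
  | leaf l, T', h, h' => by cases h'
  | node l L R, T', h, h' => by
    have hl : l ≠ k := by rintro rfl; exact h (by simp [labels])
    have hL : k ∉ L.labels := fun hm => h (by simp [labels, hm])
    have hR : k ∉ R.labels := fun hm => h (by simp [labels, hm])
    simp only [ins, List.mem_append, List.mem_map] at h'
    rcases h' with ⟨L', hL', rfl⟩ | ⟨R', hR', rfl⟩
    · simp [del, hl, del_mem_ins hL hL', del_eq_of_notMem hR]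
    · simp [del, hl, del_mem_ins hR hR', del_eq_of_notMem hL]

lemma mem_labels_mem_ins {k : ℕ} {T T' : BTree} (h : T' ∈ ins k T) : k ∈ T'.labels := by
  rw [labels_mem_ins h]; simp

lemma nodup_ins {k : ℕ} : ∀ {T : BTree}, k ∉ T.labels → (ins k T).Nodup
  | empty, _ => by simp [ins]
  | leaf l, _ => by simp [ins]
  | node l L R, h => by
    have hL : k ∉ L.labels := fun hm => h (by simp [labels, hm])
    have hR : k ∉ R.labels := fun hm => h (by simp [labels, hm])
    refine List.Nodup.append ?_ ?_ ?_
    · exact (nodup_ins hL).map (fun a b hab => by simpa using hab)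
    · exact (nodup_ins hR).map (fun a b hab => by simpa using hab)
    · intro x hx hy
      simp only [List.mem_map] at hx hy
      obtain ⟨L', hL', rfl⟩ := hx
      obtain ⟨R', hR', he⟩ := hy
      rw [BTree.node.injEq] at he
      exact hL (he.2.1 ▸ mem_labels_mem_ins hL')

lemma nodup_insStar {k : ℕ} {T : BTree} (h : k ∉ T.labels) : (insStar k T).Nodup :=
  (nodup_ins h).sublist (insStar_sublist T)

end BTree

namespace BTree

lemma labels_del_subset {k : ℕ} : ∀ {T : BTree}, (del k T).labels ⊆ T.labels
  | empty => by simp [del]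
  | leaf l => by
    by_cases h : l = k <;> simp [del, h, labels, Multiset.subset_iff]
  | node l L R => by
    by_cases h : l = k
    · simp [del, h, labels, Multiset.subset_iff]
    · simp only [del, h, if_false, labels]
      intro m hm
      rcases Multiset.mem_cons.1 hm with rfl | hm
      · simp
      · rcases Multiset.mem_add.1 hm with hm | hm
        · exact Multiset.mem_cons_of_mem (Multiset.mem_add.2 (Or.inl (labels_del_subset hm)))
        · exact Multiset.mem_cons_of_mem (Multiset.mem_add.2 (Or.inr (labels_del_subset hm)))

lemma increasing_del {k : ℕ} : ∀ {T : BTree}, T.Increasing → (del k T).Increasing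
  | empty, _ => trivial
  | leaf l, _ => by by_cases h : l = k <;> simp [del, h, Increasing]
  | node l L R, hinc => by
    obtain ⟨h1, h2, h3, h4⟩ := hinc
    by_cases h : l = k
    · simp [del, h, Increasing]
    · simp only [del, h, if_false]
      exact ⟨fun m hm => h1 m (labels_del_subset hm), fun m hm => h2 m (labels_del_subset hm),
        increasing_del h3, increasing_del h4⟩

lemma rightmost_del {k : ℕ} : ∀ {T : BTree}, T.RightmostEmpty → (del k T).RightmostEmpty
  | empty, _ => trivial
  | leaf l, h => h.elim
  | node l L R, h => by
    by_cases hl : l = k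
    · simp [del, hl, RightmostEmpty]
    · simp only [del, hl, if_false]
      exact rightmost_del (T := R) h

lemma children_labels_eq_zero {k : ℕ} {L R : BTree} (hinc : (node k L R).Increasing)
    (hle : ∀ m ∈ (node k L R).labels, m ≤ k) : L = empty ∧ R = empty := by
  obtain ⟨h1, h2, _, _⟩ := hinc
  constructor
  · refine labels_eq_zero (Multiset.eq_zero_of_forall_notMem fun m hm => ?_)
    exact absurd (hle m (by simp [labels, hm])) (not_le.2 (h1 m hm))
  · refine labels_eq_zero (Multiset.eq_zero_of_forall_notMem fun m hm => ?_)
    exact absurd (hle m (by simp [labels, hm])) (not_le.2 (h2 m hm))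

lemma nodup_parts {l : ℕ} {L R : BTree} (h : (node l L R).labels.Nodup) :
    L.labels.Nodup ∧ R.labels.Nodup ∧ (∀ m ∈ L.labels, m ∉ R.labels) ∧ l ∉ L.labels ∧
      l ∉ R.labels := by
  rw [labels, Multiset.nodup_cons, Multiset.nodup_add] at h
  obtain ⟨hl, h1, h2, h3⟩ := h
  exact ⟨h1, h2, fun m hm => (Multiset.disjoint_left.1 h3) hm,
    fun hm => hl (Multiset.mem_add.2 (Or.inl hm)), fun hm => hl (Multiset.mem_add.2 (Or.inr hm))⟩

lemma labels_del {k : ℕ} : ∀ {T : BTree}, T.Increasing → (∀ m ∈ T.labels, m ≤ k) →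
    T.labels.Nodup → (del k T).labels = T.labels.erase k
  | empty, _, _, _ => by simp [del, labels]
  | leaf l, _, _, _ => by
    by_cases h : l = k
    · subst h; simp [del, labels]
    · simp [del, h, labels, Multiset.erase_singleton,
        Multiset.erase_of_notMem (by simp [Ne.symm h] : k ∉ ({l} : Multiset ℕ))]
  | node l L R, hinc, hle, hnd => by
    by_cases h : l = k
    · subst h
      obtain ⟨rfl, rfl⟩ := children_labels_eq_zero hinc hle
      simp [del, labels]
    · obtain ⟨hndL, hndR, hdisj, _, _⟩ := nodup_parts hnd
      obtain ⟨h1, h2, h3, h4⟩ := hinc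
      have hleL : ∀ m ∈ L.labels, m ≤ k := fun m hm => hle m (by simp [labels, hm])
      have hleR : ∀ m ∈ R.labels, m ≤ k := fun m hm => hle m (by simp [labels, hm])
      simp only [del, h, if_false, labels]
      rw [Multiset.erase_cons_tail _ (by exact fun hh => h (by simpa using hh))]
      by_cases hkL : k ∈ L.labels
      · have hkR : k ∉ R.labels := hdisj k hkL
        rw [labels_del h3 hleL hndL, del_eq_of_notMem hkR,
          Multiset.erase_add_left_pos _ hkL]
      · rw [del_eq_of_notMem hkL]
        by_cases hkR : k ∈ R.labels
        · rw [labels_del h4 hleR hndR, Multiset.erase_add_right_pos _ hkR]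
        · rw [del_eq_of_notMem hkR, Multiset.erase_of_notMem
            (fun hh => (Multiset.mem_add.1 hh).elim hkL hkR)]

lemma mem_ins_del {k : ℕ} : ∀ {T : BTree}, T.Increasing → (∀ m ∈ T.labels, m ≤ k) →
    T.labels.Nodup → k ∈ T.labels → T ∈ ins k (del k T)
  | empty, _, _, _, hk => by simp [labels] at hk
  | leaf l, _, _, _, hk => by
    have : l = k := by have := hk; simp [labels] at this; omega
    subst this
    simp [del, ins]
  | node l L R, hinc, hle, hnd, hk => by
    by_cases h : l = k
    · subst h
      obtain ⟨rfl, rfl⟩ := children_labels_eq_zero hinc hle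
      simp [del, ins]
    · obtain ⟨hndL, hndR, hdisj, _, _⟩ := nodup_parts hnd
      obtain ⟨h1, h2, h3, h4⟩ := hinc
      have hleL : ∀ m ∈ L.labels, m ≤ k := fun m hm => hle m (by simp [labels, hm])
      have hleR : ∀ m ∈ R.labels, m ≤ k := fun m hm => hle m (by simp [labels, hm])
      have hk' : k ∈ L.labels ∨ k ∈ R.labels := by
        rcases Multiset.mem_cons.1 hk with h' | h'
        · exact absurd h'.symm h
        · exact Multiset.mem_add.1 h'
      simp only [del, h, if_false, ins, List.mem_append, List.mem_map]
      rcases hk' with hkL | hkR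
      · have hkR : k ∉ R.labels := hdisj k hkL
        rw [del_eq_of_notMem hkR]
        exact Or.inl ⟨L, mem_ins_del h3 hleL hndL hkL, rfl⟩
      · have hkL : k ∉ L.labels := fun hh => hdisj k hh hkR
        rw [del_eq_of_notMem hkL]
        exact Or.inr ⟨R, mem_ins_del h4 hleR hndR hkR, rfl⟩

lemma mem_insStar_del {k : ℕ} : ∀ {T : BTree}, T.Increasing → (∀ m ∈ T.labels, m ≤ k) →
    T.labels.Nodup → k ∈ T.labels → T.RightmostEmpty → T ∈ insStar k (del k T)
  | empty, _, _, _, hk, _ => by simp [labels] at hk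
  | leaf l, _, _, _, _, hr => hr.elim
  | node l L R, hinc, hle, hnd, hk, hr => by
    by_cases h : l = k
    · subst h
      obtain ⟨rfl, rfl⟩ := children_labels_eq_zero hinc hle
      simp [del, insStar]
    · obtain ⟨hndL, hndR, hdisj, _, _⟩ := nodup_parts hnd
      obtain ⟨h1, h2, h3, h4⟩ := hinc
      have hleL : ∀ m ∈ L.labels, m ≤ k := fun m hm => hle m (by simp [labels, hm])
      have hleR : ∀ m ∈ R.labels, m ≤ k := fun m hm => hle m (by simp [labels, hm])
      have hk' : k ∈ L.labels ∨ k ∈ R.labels := by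
        rcases Multiset.mem_cons.1 hk with h' | h'
        · exact absurd h'.symm h
        · exact Multiset.mem_add.1 h'
      simp only [del, h, if_false, insStar, List.mem_append, List.mem_map]
      rcases hk' with hkL | hkR
      · have hkR : k ∉ R.labels := hdisj k hkL
        rw [del_eq_of_notMem hkR]
        exact Or.inl ⟨L, mem_ins_del h3 hleL hndL hkL, rfl⟩
      · have hkL : k ∉ L.labels := fun hh => hdisj k hh hkR
        rw [del_eq_of_notMem hkL]
        exact Or.inr ⟨R, mem_insStar_del h4 hleR hndR hkR (by exact hr), rfl⟩

end BTree

namespace BTree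

def treeList : ℕ → List BTree
  | 0 => [empty]
  | n + 1 => (treeList n).flatMap (ins (n + 1))

def treeListStar : ℕ → List BTree
  | 0 => [empty]
  | n + 1 => (treeListStar n).flatMap (insStar (n + 1))

lemma range_labels (n : ℕ) :
    Multiset.map (· + 1) (Multiset.range (n + 1)) =
      (n + 1) ::ₘ Multiset.map (· + 1) (Multiset.range n) := by
  rw [Multiset.range_succ, Multiset.map_cons]

lemma lt_of_mem_rangeLabels {n m : ℕ} (h : m ∈ Multiset.map (· + 1) (Multiset.range n)) :
    m < n + 1 := by
  obtain ⟨j, hj, rfl⟩ := Multiset.mem_map.1 h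
  have := Multiset.mem_range.1 hj
  omega

lemma notMem_rangeLabels (n : ℕ) : (n + 1) ∉ Multiset.map (· + 1) (Multiset.range n) :=
  fun h => absurd (lt_of_mem_rangeLabels h) (lt_irrefl _)

lemma nodup_rangeLabels (n : ℕ) : (Multiset.map (· + 1) (Multiset.range n)).Nodup :=
  (Multiset.nodup_range n).map (fun a b h => by omega)

lemma mem_treeList {n : ℕ} {T : BTree} : T ∈ treeList n ↔ T ∈ TreeSet n := by
  induction n generalizing T with
  | zero =>
    simp only [treeList, List.mem_singleton, TreeSet, Set.mem_setOf_eq]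
    constructor
    · rintro rfl; simp [labels, Increasing]
    · rintro ⟨h1, _⟩
      exact labels_eq_zero (by simpa using h1)
  | succ n ih =>
    simp only [treeList, List.mem_flatMap, TreeSet, Set.mem_setOf_eq]
    constructor
    · rintro ⟨T0, hT0, hT⟩
      obtain ⟨hlab, hinc⟩ := (ih.1 hT0 : T0 ∈ TreeSet n)
      have hb : ∀ m ∈ T0.labels, m < n + 1 := by
        rw [hlab]; exact fun m hm => lt_of_mem_rangeLabels hm
      refine ⟨?_, increasing_mem_ins hinc hb hT⟩
      rw [labels_mem_ins hT, hlab, range_labels]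
    · rintro ⟨hlab, hinc⟩
      have hle : ∀ m ∈ T.labels, m ≤ n + 1 := by
        rw [hlab]; exact fun m hm => Nat.lt_succ_iff.1 (lt_of_mem_rangeLabels hm)
      have hnd : T.labels.Nodup := hlab ▸ nodup_rangeLabels (n + 1)
      have hk : (n + 1) ∈ T.labels := by rw [hlab, range_labels]; simp
      refine ⟨del (n + 1) T, ih.2 ⟨?_, increasing_del hinc⟩, mem_ins_del hinc hle hnd hk⟩
      rw [labels_del hinc hle hnd, hlab, range_labels, Multiset.erase_cons_head]

lemma mem_treeListStar {n : ℕ} {T : BTree} : T ∈ treeListStar n ↔ T ∈ TreeSetStar n := by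
  induction n generalizing T with
  | zero =>
    simp only [treeListStar, List.mem_singleton, TreeSetStar, TreeSet, Set.mem_setOf_eq]
    constructor
    · rintro rfl; simp [labels, Increasing, RightmostEmpty]
    · rintro ⟨⟨h1, _⟩, _⟩
      exact labels_eq_zero (by simpa using h1)
  | succ n ih =>
    simp only [treeListStar, List.mem_flatMap, TreeSetStar, TreeSet, Set.mem_setOf_eq]
    constructor
    · rintro ⟨T0, hT0, hT⟩
      obtain ⟨⟨hlab, hinc⟩, hr⟩ := (ih.1 hT0 : T0 ∈ TreeSetStar n)
      have hb : ∀ m ∈ T0.labels, m < n + 1 := by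
        rw [hlab]; exact fun m hm => lt_of_mem_rangeLabels hm
      have hT' : T ∈ ins (n + 1) T0 := (insStar_sublist T0).mem hT
      refine ⟨⟨?_, increasing_mem_ins hinc hb hT'⟩, rightmost_mem_insStar hr hT⟩
      rw [labels_mem_ins hT', hlab, range_labels]
    · rintro ⟨⟨hlab, hinc⟩, hr⟩
      have hle : ∀ m ∈ T.labels, m ≤ n + 1 := by
        rw [hlab]; exact fun m hm => Nat.lt_succ_iff.1 (lt_of_mem_rangeLabels hm)
      have hnd : T.labels.Nodup := hlab ▸ nodup_rangeLabels (n + 1)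
      have hk : (n + 1) ∈ T.labels := by rw [hlab, range_labels]; simp
      refine ⟨del (n + 1) T, ih.2 ⟨⟨?_, increasing_del hinc⟩, rightmost_del hr⟩,
        mem_insStar_del hinc hle hnd hk hr⟩
      rw [labels_del hinc hle hnd, hlab, range_labels, Multiset.erase_cons_head]

lemma notMem_labels_treeList {n : ℕ} {T : BTree} (h : T ∈ treeList n) :
    (n + 1) ∉ T.labels := by
  rw [(mem_treeList.1 h).1]
  exact notMem_rangeLabels n

lemma notMem_labels_treeListStar {n : ℕ} {T : BTree} (h : T ∈ treeListStar n) :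
    (n + 1) ∉ T.labels := by
  rw [(mem_treeListStar.1 h).1.1]
  exact notMem_rangeLabels n

lemma nodup_treeList (n : ℕ) : (treeList n).Nodup := by
  induction n with
  | zero => simp [treeList]
  | succ n ih =>
    rw [treeList, List.nodup_flatMap]
    refine ⟨fun T hT => nodup_ins (notMem_labels_treeList hT), ?_⟩
    refine List.Pairwise.imp_of_mem ?_ ih
    intro T1 T2 h1 h2 hne
    intro x hx hy
    exact hne ((del_mem_ins (notMem_labels_treeList h1) hx).symm.trans
      (del_mem_ins (notMem_labels_treeList h2) hy))

lemma nodup_treeListStar (n : ℕ) : (treeListStar n).Nodup := by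
  induction n with
  | zero => simp [treeListStar]
  | succ n ih =>
    rw [treeListStar, List.nodup_flatMap]
    refine ⟨fun T hT => nodup_insStar (notMem_labels_treeListStar hT), ?_⟩
    refine List.Pairwise.imp_of_mem ?_ ih
    intro T1 T2 h1 h2 hne
    intro x hx hy
    exact hne ((del_mem_ins (notMem_labels_treeListStar h1)
        ((insStar_sublist T1).mem hx)).symm.trans
      (del_mem_ins (notMem_labels_treeListStar h2) ((insStar_sublist T2).mem hy)))

end BTree

namespace BTree

lemma derivXpow (e : ℕ) : derivative ((X : Polynomial ℝ) ^ e) * X = C (e : ℝ) * X ^ e := by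
  cases e with
  | zero => simp
  | succ m => rw [derivative_X_pow]; push_cast; rw [mul_assoc, ← pow_succ]

lemma list_sum_mul {α : Type*} (l : List α) (f : α → Polynomial ℝ) (r : Polynomial ℝ) :
    (l.map f).sum * r = (l.map fun x => f x * r).sum := by
  induction l with
  | nil => simp
  | cons a t ih => simp [add_mul, ih]

lemma list_mul_sum {α : Type*} (l : List α) (f : α → Polynomial ℝ) (r : Polynomial ℝ) :
    r * (l.map f).sum = (l.map fun x => r * f x).sum := by
  induction l with
  | nil => simp
  | cons a t ih => simp [mul_add, ih]

lemma flatMap_map_sum (l : List BTree) (f : BTree → List BTree) (g : BTree → Polynomial ℝ) :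
    ((l.flatMap f).map g).sum = (l.map fun x => ((f x).map g).sum).sum := by
  induction l with
  | nil => simp
  | cons a t ih => simp [List.flatMap_cons, ih]

lemma list_map_add {α : Type*} (l : List α) (f g : α → Polynomial ℝ) :
    (l.map fun x => f x + g x).sum = (l.map f).sum + (l.map g).sum := by
  induction l with
  | nil => simp
  | cons a t ih => simp only [List.map_cons, List.sum_cons, ih]; ring

lemma insSum (k : ℕ) : ∀ T : BTree,
    ((ins k T).map fun T' => (X : Polynomial ℝ) ^ T'.emp).sum * X =
      C (T.emp : ℝ) * (X ^ T.emp + X ^ (T.emp + 2))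
  | empty => by simp [ins, emp]; ring
  | leaf l => by simp [ins, emp]
  | node l L R => by
    have hL := insSum k L
    have hR := insSum k R
    simp only [ins, List.map_append, List.sum_append, List.map_map]
    have e1 : ((fun T' : BTree => (X : Polynomial ℝ) ^ T'.emp) ∘ fun L' => node l L' R) =
        fun L' => (X : Polynomial ℝ) ^ L'.emp * X ^ R.emp := by
      funext L'; simp [emp, pow_add]
    have e2 : ((fun T' : BTree => (X : Polynomial ℝ) ^ T'.emp) ∘ fun R' => node l L R') =
        fun R' => (X : Polynomial ℝ) ^ R'.emp * X ^ L.emp := by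
      funext R'; simp [emp, pow_add]; ring
    rw [e1, e2, ← list_sum_mul, ← list_sum_mul]
    set SL := ((ins k L).map fun T' => (X : Polynomial ℝ) ^ T'.emp).sum with hSL
    set SR := ((ins k R).map fun T' => (X : Polynomial ℝ) ^ T'.emp).sum with hSR
    have h1 : (SL * X ^ R.emp + SR * X ^ L.emp) * X =
        (SL * X) * X ^ R.emp + (SR * X) * X ^ L.emp := by ring
    rw [h1, hL, hR]
    show _ = C ((L.emp + R.emp : ℕ) : ℝ) * (X ^ (L.emp + R.emp) + X ^ (L.emp + R.emp + 2))
    push_cast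
    rw [C_add]
    simp only [pow_add]
    ring

lemma insStarSum (k : ℕ) : ∀ T : BTree, T.RightmostEmpty →
    ((insStar k T).map fun T' => (X : Polynomial ℝ) ^ (T'.emp - 1)).sum * X ^ 2 =
      C ((T.emp - 1 : ℕ) : ℝ) * (X ^ T.emp + X ^ (T.emp + 2)) + X ^ (T.emp + 2)
  | empty, _ => by
    simp [insStar, emp]
    ring
  | leaf l, hr => hr.elim
  | node l L R, hr => by
    have hb : 1 ≤ R.emp := one_le_emp_of_rightmost (T := R) hr
    have hL := insSum k L
    have hR := insStarSum k R hr
    simp only [insStar, List.map_append, List.sum_append, List.map_map]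
    have e1 : ((fun T' : BTree => (X : Polynomial ℝ) ^ (T'.emp - 1)) ∘ fun L' => node l L' R) =
        fun L' => (X : Polynomial ℝ) ^ L'.emp * X ^ (R.emp - 1) := by
      funext L'
      simp only [Function.comp_apply, emp]
      rw [← pow_add]
      congr 1
      omega
    have e2 : ((insStar k R).map
          ((fun T' : BTree => (X : Polynomial ℝ) ^ (T'.emp - 1)) ∘ fun R' => node l L R')) =
        (insStar k R).map fun R' => (X : Polynomial ℝ) ^ (R'.emp - 1) * X ^ L.emp := by
      refine List.map_congr_left fun R' hR' => ?_
      have h1 : 1 ≤ R'.emp := one_le_emp_of_rightmost (rightmost_mem_insStar (T := R) (T' := R') (by exact hr) hR')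
      simp only [Function.comp_apply, emp]
      rw [← pow_add]
      congr 1
      omega
    rw [e1, e2, ← list_sum_mul, ← list_sum_mul]
    set SL := ((ins k L).map fun T' => (X : Polynomial ℝ) ^ T'.emp).sum with hSL
    set SR := ((insStar k R).map fun T' => (X : Polynomial ℝ) ^ (T'.emp - 1)).sum with hSR
    have hX : (X : Polynomial ℝ) ^ (R.emp - 1) * X = X ^ R.emp := by
      rw [← pow_succ]; congr 1; omega
    have h1 : (SL * X ^ (R.emp - 1) + SR * X ^ L.emp) * X ^ 2 =
        (SL * X) * (X ^ (R.emp - 1) * X) + (SR * X ^ 2) * X ^ L.emp := by ring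
    rw [h1, hX, hL, hR]
    have h2 : (node l L R).emp = L.emp + R.emp := rfl
    rw [h2]
    have h3 : (L.emp + R.emp - 1 : ℕ) = L.emp + (R.emp - 1) := by omega
    have h4 : (R.emp - 1 : ℕ) + 1 = R.emp := by omega
    rw [h3]
    push_cast
    rw [C_add]
    have h5 : (X : Polynomial ℝ) ^ (L.emp + R.emp) = X ^ L.emp * X ^ R.emp := by rw [pow_add]
    have h6 : (X : Polynomial ℝ) ^ (L.emp + R.emp + 2) = X ^ L.emp * X ^ (R.emp + 2) := by
      ring
    rw [h5, h6]
    ring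

end BTree

namespace BTree

lemma sumP (n : ℕ) : polyP n = ((treeList n).map fun T => (X : Polynomial ℝ) ^ T.emp).sum := by
  induction n with
  | zero => simp [polyP, treeList, emp]
  | succ n ih =>
    refine mul_right_cancel₀ (X_ne_zero (R := ℝ)) ?_
    have key : ∀ T : BTree,
        ((ins (n + 1) T).map fun T' => (X : Polynomial ℝ) ^ T'.emp).sum * X =
          (1 + X ^ 2) * derivative ((X : Polynomial ℝ) ^ T.emp) * X := by
      intro T
      rw [insSum, mul_assoc, derivXpow]
      ring
    calc polyP (n + 1) * X
        = (1 + X ^ 2) * derivative ((treeList n).map fun T =>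
            (X : Polynomial ℝ) ^ T.emp).sum * X := by rw [polyP, ih]
      _ = ((treeList n).map fun T =>
            (1 + X ^ 2) * derivative ((X : Polynomial ℝ) ^ T.emp) * X).sum := by
          rw [map_list_sum (derivative (R := ℝ)), List.map_map, list_mul_sum, list_sum_mul]
          rfl
      _ = ((treeList n).map fun T =>
            ((ins (n + 1) T).map fun T' => (X : Polynomial ℝ) ^ T'.emp).sum * X).sum := by
          refine congrArg _ (List.map_congr_left fun T _ => (key T).symm)
      _ = ((treeList (n + 1)).map fun T => (X : Polynomial ℝ) ^ T.emp).sum * X := by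
          rw [treeList, flatMap_map_sum, list_sum_mul]

lemma sumQ (n : ℕ) :
    polyQ 1 n = ((treeListStar n).map fun T => (X : Polynomial ℝ) ^ (T.emp - 1)).sum := by
  induction n with
  | zero => simp [polyQ, treeListStar, emp]
  | succ n ih =>
    refine mul_right_cancel₀ (pow_ne_zero 2 (X_ne_zero (R := ℝ))) ?_
    have key : ∀ T ∈ treeListStar n,
        ((insStar (n + 1) T).map fun T' => (X : Polynomial ℝ) ^ (T'.emp - 1)).sum * X ^ 2 =
          ((1 + X ^ 2) * derivative ((X : Polynomial ℝ) ^ (T.emp - 1)) +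
            C (1 : ℝ) * X * X ^ (T.emp - 1)) * X ^ 2 := by
      intro T hT
      have hr : T.RightmostEmpty := (mem_treeListStar.1 hT).2
      have he : 1 ≤ T.emp := one_le_emp_of_rightmost hr
      simp only [Polynomial.C_1, one_mul]
      rw [insStarSum _ T hr]
      have hd : derivative ((X : Polynomial ℝ) ^ (T.emp - 1)) * X =
          C ((T.emp - 1 : ℕ) : ℝ) * X ^ (T.emp - 1) := derivXpow _
      have hx1 : (X : Polynomial ℝ) ^ (T.emp - 1) * X = X ^ T.emp := by
        rw [← pow_succ]; congr 1; omega
      have expand : ((1 + X ^ 2) * derivative ((X : Polynomial ℝ) ^ (T.emp - 1)) +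
            X * X ^ (T.emp - 1)) * X ^ 2
          = (1 + X ^ 2) * (derivative ((X : Polynomial ℝ) ^ (T.emp - 1)) * X) * X +
            ((X : Polynomial ℝ) ^ (T.emp - 1) * X) * X ^ 2 := by ring
      rw [expand, hd]
      rw [show (1 + (X : Polynomial ℝ) ^ 2) * (C ((T.emp - 1 : ℕ) : ℝ) * X ^ (T.emp - 1)) * X =
        (1 + X ^ 2) * C ((T.emp - 1 : ℕ) : ℝ) * (X ^ (T.emp - 1) * X) by ring, hx1]
      rw [show (X : Polynomial ℝ) ^ (T.emp + 2) = X ^ T.emp * X ^ 2 by ring]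
      ring
    calc polyQ 1 (n + 1) * X ^ 2
        = ((1 + X ^ 2) * derivative (((treeListStar n).map fun T =>
              (X : Polynomial ℝ) ^ (T.emp - 1)).sum) +
            C (1 : ℝ) * X * ((treeListStar n).map fun T =>
              (X : Polynomial ℝ) ^ (T.emp - 1)).sum) * X ^ 2 := by rw [polyQ, ih]
      _ = ((treeListStar n).map fun T =>
            ((1 + X ^ 2) * derivative ((X : Polynomial ℝ) ^ (T.emp - 1)) +
              C (1 : ℝ) * X * X ^ (T.emp - 1)) * X ^ 2).sum := by
          rw [map_list_sum (derivative (R := ℝ)), List.map_map, list_mul_sum, list_mul_sum,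
            ← list_map_add, list_sum_mul]
          rfl
      _ = ((treeListStar n).map fun T =>
            ((insStar (n + 1) T).map fun T' =>
              (X : Polynomial ℝ) ^ (T'.emp - 1)).sum * X ^ 2).sum := by
          refine congrArg _ (List.map_congr_left fun T hT => (key T hT).symm)
      _ = ((treeListStar (n + 1)).map fun T => (X : Polynomial ℝ) ^ (T.emp - 1)).sum * X ^ 2 := by
          rw [treeListStar, flatMap_map_sum, list_sum_mul]

end BTree

theorem stmt19 (n : ℕ) :
    (polyP n = ∑ᶠ T ∈ TreeSet n, (X : Polynomial ℝ) ^ T.emp) ∧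
    (polyQ 1 n = ∑ᶠ T ∈ TreeSetStar n, (X : Polynomial ℝ) ^ (T.emp - 1)) := by
  constructor
  · have hnd : ((BTree.treeList n : List BTree) : Multiset BTree).Nodup :=
      (Multiset.coe_nodup).2 (BTree.nodup_treeList n)
    have hset : TreeSet n = ↑(⟨(BTree.treeList n : Multiset BTree), hnd⟩ : Finset BTree) := by
      ext T
      simp only [Finset.coe_mem, Finset.mem_coe, Finset.mem_mk, Multiset.mem_coe]
      exact BTree.mem_treeList.symm
    rw [hset, finsum_mem_coe_finset, Finset.sum_mk, Multiset.map_coe, Multiset.sum_coe]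
    exact BTree.sumP n
  · have hnd : ((BTree.treeListStar n : List BTree) : Multiset BTree).Nodup :=
      (Multiset.coe_nodup).2 (BTree.nodup_treeListStar n)
    have hset : TreeSetStar n =
        ↑(⟨(BTree.treeListStar n : Multiset BTree), hnd⟩ : Finset BTree) := by
      ext T
      simp only [Finset.coe_mem, Finset.mem_coe, Finset.mem_mk, Multiset.mem_coe]
      exact BTree.mem_treeListStar.symm
    rw [hset, finsum_mem_coe_finset, Finset.sum_mk, Multiset.map_coe, Multiset.sum_coe]
    exact BTree.sumQ n
end
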